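/- arXiv:1306.5167 — 6 statements merged into one kernel-verified Lean document; each statement's English description precedes it below -/
import Mathlib

section
/- For all integers a, b with 1 ≤ a ≤ b and every natural number n, the Turán number of the complete bipartite graph satisfies ext(n, K_{a,b}) ≤ (1/2)·(b−1)^{1/a}·n^{2−1/a} + ((a−1)/2)·n. -/
open Finset SimpleGraph

/-- `G` contains a copy of `H`, i.e. a subgraph isomorphic to `H`. -/
def SimpleGraph.ContainsCopy {α β : Type*} (G : SimpleGraph α) (H : SimpleGraph β) : Prop :=
  ∃ f : β ↪ α, ∀ u v, H.Adj u v → G.Adj (f u) (f v)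

/-- The number of edges of a simple graph on a finite vertex set. -/
noncomputable def edgeCount {V : Type*} [Fintype V] (G : SimpleGraph V) : ℕ :=
  G.edgeSet.ncard

/-- The Turán number `ext(n, H)`: the maximum number of edges of a simple graph on
`n` vertices containing no subgraph isomorphic to `H`. -/
noncomputable def extNum {β : Type*} (n : ℕ) (H : SimpleGraph β) : ℕ :=
  sSup {e | ∃ G : SimpleGraph (Fin n), ¬ G.ContainsCopy H ∧ e = edgeCount G}

/-! Count pairs `(v, S)` with `S` an `a`-set of neighbours of `v`. A `K_{a,b}`-free graph has
at most `b - 1` common neighbours of any `a`-set, so `∑ᵥ C(d(v), a) ≤ (b - 1) C(n, a)`.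
As `(d + 1 - a)^a ≤ a! C(d, a)` and `a! C(n, a) ≤ n^a`, this gives
`∑ᵥ (d(v) + 1 - a)^a ≤ (b - 1) n^a`, and the power mean inequality turns it into
`∑ᵥ (d(v) + 1 - a) ≤ (b - 1)^{1/a} n^{2 - 1/a}`, whose left side is at least `2e - (a - 1) n`. -/

theorem SimpleGraph.containsCopy_iff_isContained {α β : Type*} {G : SimpleGraph α} {H : SimpleGraph β} :
    G.ContainsCopy H ↔ H ⊑ G := by
  rw [isContained_iff_exists_le_comap]
  rfl

theorem edgeCount_eq_card_edgeFinset {V : Type*} [Fintype V] (G : SimpleGraph V)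
    [DecidableRel G.Adj] : edgeCount G = #G.edgeFinset := by
  rw [edgeCount, ← coe_edgeFinset, Set.ncard_coe_finset]

theorem extNum_eq_extremalNumber {β : Type*} (n : ℕ) (H : SimpleGraph β) :
    extNum n H = extremalNumber n H := by
  classical
  have hfree_le : ∀ G : SimpleGraph (Fin n), H.Free G → edgeCount G ≤ extremalNumber n H := by
    intro G hG
    simpa [edgeCount_eq_card_edgeFinset] using card_edgeFinset_le_extremalNumber hG
  have hupper : extremalNumber n H ∈ upperBounds
      {e | ∃ G : SimpleGraph (Fin n), ¬ G.ContainsCopy H ∧ e = edgeCount G} := by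
    rintro _ ⟨G, hG, rfl⟩
    exact hfree_le G (mt containsCopy_iff_isContained.2 hG)
  refine le_antisymm (csSup_le' hupper) ?_
  have h := (extremalNumber_le_iff (V := Fin n) H (extNum n H)).2
  rw [Fintype.card_fin] at h
  refine h fun G _ hG => ?_
  rw [← edgeCount_eq_card_edgeFinset]
  exact le_csSup ⟨_, hupper⟩ ⟨G, mt containsCopy_iff_isContained.1 hG, rfl⟩

theorem sum_le_of_sum_pow_le_mul_card_pow {ι : Type*} {s : Finset ι} {f : ι → ℝ}
    (hf : ∀ i ∈ s, 0 ≤ f i) {k : ℕ} (hk : k ≠ 0) {c : ℝ} (hc : 0 ≤ c)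
    (h : ∑ i ∈ s, f i ^ k ≤ c * #s ^ k) :
    ∑ i ∈ s, f i ≤ c ^ (1 / k : ℝ) * (#s : ℝ) ^ (2 - 1 / k : ℝ) := by
  obtain ⟨m, rfl⟩ := Nat.exists_eq_succ_of_ne_zero hk
  have hn : (0 : ℝ) ≤ #s := Nat.cast_nonneg _
  rw [← pow_le_pow_iff_left₀ (sum_nonneg hf) (by positivity) hk]
  calc (∑ i ∈ s, f i) ^ (m + 1)
      ≤ (#s : ℝ) ^ m * ∑ i ∈ s, f i ^ (m + 1) := pow_sum_le_card_mul_sum_pow hf m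
    _ ≤ (#s : ℝ) ^ m * (c * #s ^ (m + 1)) := by gcongr
    _ = c * (#s : ℝ) ^ (2 * m + 1) := by ring
    _ = (c ^ (1 / (m + 1 : ℕ) : ℝ) * (#s : ℝ) ^ (2 - 1 / (m + 1 : ℕ) : ℝ)) ^ (m + 1) := by
      rw [mul_pow, one_div, Real.rpow_inv_natCast_pow hc hk, ← Real.rpow_natCast _ (m + 1),
        ← Real.rpow_mul hn, ← Real.rpow_natCast]
      congr 2
      push_cast
      field_simp
      ring

namespace SimpleGraph

variable {V : Type*} [Fintype V] {G : SimpleGraph V} [DecidableRel G.Adj] {a b : ℕ}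

theorem sum_choose_degree_eq_sum_card_commonNeighbors [DecidableEq V] (a : ℕ) :
    ∑ v, (G.degree v).choose a =
      ∑ S ∈ univ.powersetCard a, #{v | S ⊆ G.neighborFinset v} := by
  have hchoose (v : V) :
      (G.degree v).choose a = #{S ∈ univ.powersetCard a | S ⊆ G.neighborFinset v} := by
    rw [← card_neighborFinset_eq_degree, ← card_powersetCard]
    congr 1
    ext S
    simp [mem_powersetCard, and_comm]
  simp_rw [hchoose]
  exact sum_card_bipartiteAbove_eq_sum_card_bipartiteBelow _

theorem card_commonNeighbors_lt_of_free [DecidableEq V]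
    (hG : (completeBipartiteGraph (Fin a) (Fin b)).Free G) {S : Finset V} (hS : #S = a) :
    #{v | S ⊆ G.neighborFinset v} < b := by
  by_contra! h
  obtain ⟨T, hTS, hT⟩ := exists_subset_card_eq h
  refine hG (completeBipartiteGraph_isContained_iff.2 ⟨S, T, by simpa, by simpa, ?_⟩)
  intro v hv w hw
  exact ((G.mem_neighborFinset w v).1 ((mem_filter.1 (hTS hw)).2 hv)).symm

theorem sum_choose_degree_le_of_free (hG : (completeBipartiteGraph (Fin a) (Fin b)).Free G) :
    ∑ v, (G.degree v).choose a ≤ (b - 1) * (Fintype.card V).choose a := by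
  classical
  rw [sum_choose_degree_eq_sum_card_commonNeighbors]
  refine (sum_le_card_nsmul _ _ (b - 1) fun S hS => ?_).trans_eq ?_
  · exact Nat.le_sub_one_of_lt (card_commonNeighbors_lt_of_free hG (mem_powersetCard.1 hS).2)
  · rw [card_powersetCard, card_univ, smul_eq_mul, mul_comm]

theorem sum_pow_degree_sub_le_of_free (hG : (completeBipartiteGraph (Fin a) (Fin b)).Free G) :
    ∑ v, (G.degree v + 1 - a) ^ a ≤ (b - 1) * Fintype.card V ^ a :=
  calc ∑ v, (G.degree v + 1 - a) ^ a
      ≤ ∑ v, a.factorial * (G.degree v).choose a := by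
        gcongr with v
        rw [← Nat.descFactorial_eq_factorial_mul_choose]
        exact Nat.pow_sub_le_descFactorial _ _
    _ ≤ a.factorial * ((b - 1) * (Fintype.card V).choose a) := by
        rw [← mul_sum]
        gcongr
        exact sum_choose_degree_le_of_free hG
    _ = (b - 1) * (Fintype.card V).descFactorial a := by
        rw [Nat.descFactorial_eq_factorial_mul_choose]
        ring
    _ ≤ (b - 1) * Fintype.card V ^ a := by
        gcongr
        exact Nat.descFactorial_le_pow _ _

theorem two_mul_card_edgeFinset_le_of_free (ha : a ≠ 0) (hb : 1 ≤ b)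
    (hG : (completeBipartiteGraph (Fin a) (Fin b)).Free G) :
    2 * (#G.edgeFinset : ℝ) ≤ ((b : ℝ) - 1) ^ (1 / a : ℝ) * (Fintype.card V : ℝ) ^ (2 - 1 / a : ℝ)
      + ((a : ℝ) - 1) * Fintype.card V := by
  have hsub (d : ℕ) : (d : ℝ) - (a - 1) ≤ ((d + 1 - a : ℕ) : ℝ) := by
    have : ((d : ℤ) - (a - 1) : ℤ) ≤ ((d + 1 - a : ℕ) : ℤ) := by omega
    exact_mod_cast this
  have hsum : 2 * (#G.edgeFinset : ℝ) - ((a : ℝ) - 1) * Fintype.card V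
      ≤ ∑ v, ((G.degree v + 1 - a : ℕ) : ℝ) :=
    calc 2 * (#G.edgeFinset : ℝ) - ((a : ℝ) - 1) * Fintype.card V
        = ∑ v, ((G.degree v : ℝ) - (a - 1)) := by
          rw [sum_sub_distrib, ← Nat.cast_sum, sum_degrees_eq_twice_card_edges]
          simp only [Nat.cast_mul, Nat.cast_ofNat, sum_const, card_univ, nsmul_eq_mul]
          ring
      _ ≤ ∑ v, ((G.degree v + 1 - a : ℕ) : ℝ) := sum_le_sum fun v _ => hsub _
  have hpow : ∑ v, ((G.degree v + 1 - a : ℕ) : ℝ) ^ a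
      ≤ ((b - 1 : ℕ) : ℝ) * (#(univ : Finset V) : ℝ) ^ a := by
    rw [card_univ]
    exact_mod_cast sum_pow_degree_sub_le_of_free hG
  have hroot := sum_le_of_sum_pow_le_mul_card_pow (fun _ _ => Nat.cast_nonneg _) ha
    (Nat.cast_nonneg _) hpow
  rw [card_univ, Nat.cast_sub hb, Nat.cast_one] at hroot
  linarith

end SimpleGraph

/-- Kővári–T. Sós–Turán: for `1 ≤ a ≤ b`,
`ext(n, K_{a,b}) ≤ (1/2)·(b−1)^{1/a}·n^{2−1/a} + ((a−1)/2)·n`. -/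
theorem kovari_sos_turan (a b : ℕ) (ha : 1 ≤ a) (hab : a ≤ b) (n : ℕ) :
    (extNum n (completeBipartiteGraph (Fin a) (Fin b)) : ℝ) ≤
      1 / 2 * ((b : ℝ) - 1) ^ ((1 : ℝ) / a) * (n : ℝ) ^ (2 - (1 : ℝ) / a)
        + ((a : ℝ) - 1) / 2 * n := by
  have haR : (1 : ℝ) ≤ a := by exact_mod_cast ha
  have hbR : (1 : ℝ) ≤ b := by exact_mod_cast ha.trans hab
  have hnonneg : 0 ≤ 1 / 2 * ((b : ℝ) - 1) ^ ((1 : ℝ) / a) * (n : ℝ) ^ (2 - (1 : ℝ) / a)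
      + ((a : ℝ) - 1) / 2 * n := by
    have := Real.rpow_nonneg (sub_nonneg.2 hbR) ((1 : ℝ) / a)
    have : 0 ≤ ((a : ℝ) - 1) / 2 * n := by
      have := sub_nonneg.2 haR
      positivity
    positivity
  have h := extremalNumber_le_iff_of_nonneg (V := Fin n)
    (completeBipartiteGraph (Fin a) (Fin b)) hnonneg
  rw [Fintype.card_fin] at h
  rw [extNum_eq_extremalNumber, h]
  intro G _ hG
  have := G.two_mul_card_edgeFinset_le_of_free (by omega) (ha.trans hab) hG
  rw [Fintype.card_fin] at this
  linarith
end

section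
/- For all integers a, b ≥ 1 and all integers m, n ≥ 1, the Zarankiewicz number satisfies Z(m, n, a, b) ≤ (b−1)^{1/a}·m·n^{1−1/a} + (a−1)·n. -/
open Finset SimpleGraph

/-- The Zarankiewicz number `Z(m,n,a,b)`: the maximum number of `1` entries in an
`m × n` 0-1 matrix containing no `a × b` all-ones submatrix. -/
noncomputable def zarankiewicz (m n a b : ℕ) : ℕ :=
  sSup {k | ∃ M : Fin m → Fin n → Bool,
    (¬ ∃ (R : Finset (Fin m)) (C : Finset (Fin n)), R.card = a ∧ C.card = b ∧
        ∀ i ∈ R, ∀ j ∈ C, M i j = true) ∧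
    k = (Finset.univ.filter fun p : Fin m × Fin n => M p.1 p.2 = true).card}

/-!
Kővári–Sós–Turán. Let `c_j` be the number of ones in column `j`. An `a`-set of rows lies inside
at most `b - 1` column supports, so double counting pairs (`a`-set of rows, column containing it)
gives `∑ⱼ C(c_j, a) ≤ (b - 1) C(m, a)`; as `(c - a + 1)₊ ^ a ≤ a! C(c, a)` and `a! C(m, a) ≤ m ^ a`,
this yields `∑ⱼ (c_j - a + 1)₊ ^ a ≤ (b - 1) m ^ a`.
By the power mean inequality `(∑ⱼ (c_j - a + 1)₊) ^ a ≤ n ^ (a - 1) ∑ⱼ (c_j - a + 1)₊ ^ a`,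
and `∑ⱼ (c_j - a + 1)₊` is at least the number of ones minus `(a - 1) n`.
-/

section BoolMatrix

variable {α β : Type*} [Fintype α] [Fintype β]

def HasAllOnesSubmatrix (M : α → β → Bool) (a b : ℕ) : Prop :=
  ∃ (R : Finset α) (C : Finset β), #R = a ∧ #C = b ∧ ∀ i ∈ R, ∀ j ∈ C, M i j = true

def colSupport (M : α → β → Bool) (j : β) : Finset α := {i | M i j = true}

theorem card_ones_eq_sum_card_colSupport (M : α → β → Bool) :
    #{p : α × β | M p.1 p.2 = true} = ∑ j, #(colSupport M j) := by
  rw [card_filter, ← univ_product_univ, sum_product_right]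
  simp only [colSupport, card_filter]

theorem card_filter_subset_colSupport_lt [DecidableEq α] {M : α → β → Bool} {a b : ℕ}
    (hM : ¬ HasAllOnesSubmatrix M a b) {A : Finset α} (hA : #A = a) :
    #{j | A ⊆ colSupport M j} < b := by
  by_contra! h
  obtain ⟨C, hC, hCb⟩ := exists_subset_card_eq h
  refine hM ⟨A, C, hA, hCb, fun i hi j hj => ?_⟩
  have hAj : A ⊆ colSupport M j := (mem_filter.mp (hC hj)).2
  simpa [colSupport] using hAj hi

theorem sum_choose_card_colSupport_le [DecidableEq α] {M : α → β → Bool} {a b : ℕ}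
    (hM : ¬ HasAllOnesSubmatrix M a b) :
    ∑ j, (#(colSupport M j)).choose a ≤ (b - 1) * (Fintype.card α).choose a := by
  have hcol (j : β) :
      #((univ.powersetCard a).bipartiteBelow (· ⊆ colSupport M ·) j)
        = (#(colSupport M j)).choose a := by
    rw [← card_powersetCard]
    congr 1
    ext A
    simp [bipartiteBelow, mem_powersetCard, and_comm]
  calc ∑ j, (#(colSupport M j)).choose a
      = ∑ A ∈ univ.powersetCard a, #(univ.bipartiteAbove (· ⊆ colSupport M ·) A) := by
        simp_rw [← hcol]
        exact (sum_card_bipartiteAbove_eq_sum_card_bipartiteBelow _).symm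
    _ ≤ ∑ _A ∈ univ.powersetCard a, (b - 1) := by
        refine sum_le_sum fun A hA => Nat.le_sub_one_of_lt ?_
        exact card_filter_subset_colSupport_lt hM (mem_powersetCard.mp hA).2
    _ = (b - 1) * (Fintype.card α).choose a := by
        rw [sum_const, card_powersetCard, card_univ, smul_eq_mul, mul_comm]

theorem sum_pow_card_colSupport_sub_le {M : α → β → Bool} {a b : ℕ}
    (hM : ¬ HasAllOnesSubmatrix M a b) :
    ∑ j, (#(colSupport M j) + 1 - a) ^ a ≤ (b - 1) * Fintype.card α ^ a := by
  classical
  calc ∑ j, (#(colSupport M j) + 1 - a) ^ a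
      ≤ ∑ j, a.factorial * (#(colSupport M j)).choose a := by
        refine sum_le_sum fun j _ => ?_
        rw [← Nat.descFactorial_eq_factorial_mul_choose]
        exact Nat.pow_sub_le_descFactorial _ _
    _ ≤ a.factorial * ((b - 1) * (Fintype.card α).choose a) := by
        rw [← mul_sum]
        exact Nat.mul_le_mul_left _ (sum_choose_card_colSupport_le hM)
    _ = (b - 1) * (Fintype.card α).descFactorial a := by
        rw [Nat.descFactorial_eq_factorial_mul_choose]
        ring
    _ ≤ (b - 1) * Fintype.card α ^ a := Nat.mul_le_mul_left _ (Nat.descFactorial_le_pow _ _)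

end BoolMatrix

theorem Real.rpow_one_div_mul_pow_mul_pow_pred {x y z : ℝ} (hx : 0 ≤ x) (hy : 0 ≤ y)
    (hz : 0 ≤ z) {a : ℕ} (ha : 1 ≤ a) :
    (x * y ^ a * z ^ (a - 1)) ^ ((1 : ℝ) / a) = x ^ ((1 : ℝ) / a) * y * z ^ (1 - (1 : ℝ) / a) := by
  have ha' : (a : ℝ) ≠ 0 := by positivity
  rw [Real.mul_rpow (by positivity) (by positivity), Real.mul_rpow hx (by positivity),
    ← Real.rpow_natCast y, ← Real.rpow_mul hy, ← Real.rpow_natCast z, ← Real.rpow_mul hz,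
    Nat.cast_sub ha, Nat.cast_one, mul_one_div_cancel ha', Real.rpow_one]
  congr 2
  field_simp

theorem natCast_sub_le_natCast_tsub (x y : ℕ) : (x : ℝ) - y ≤ ((x - y : ℕ) : ℝ) := by
  have h : (x : ℝ) ≤ ((x - y : ℕ) : ℝ) + y := by exact_mod_cast le_tsub_add
  linarith

theorem card_ones_le_of_not_hasAllOnesSubmatrix {α β : Type*} [Fintype α] [Fintype β]
    {M : α → β → Bool} {a b : ℕ} (ha : 1 ≤ a) (hb : 1 ≤ b) (hM : ¬ HasAllOnesSubmatrix M a b) :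
    (#{p : α × β | M p.1 p.2 = true} : ℝ) ≤
      ((b : ℝ) - 1) ^ ((1 : ℝ) / a) * Fintype.card α * (Fintype.card β : ℝ) ^ (1 - (1 : ℝ) / a)
        + ((a : ℝ) - 1) * Fintype.card β := by
  set m : ℝ := (Fintype.card α : ℝ)
  set n : ℝ := (Fintype.card β : ℝ)
  set t : β → ℝ := fun j => ((#(colSupport M j) + 1 - a : ℕ) : ℝ)
  have ht : ∀ j ∈ univ, 0 ≤ t j := fun j _ => Nat.cast_nonneg _
  have hb' : (0 : ℝ) ≤ b - 1 := by rw [sub_nonneg]; exact_mod_cast hb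
  have h_ones : (#{p : α × β | M p.1 p.2 = true} : ℝ) - (a - 1) * n ≤ ∑ j, t j := by
    calc (#{p : α × β | M p.1 p.2 = true} : ℝ) - (a - 1) * n
        = ∑ j, ((#(colSupport M j) + 1 : ℕ) - (a : ℝ)) := by
          rw [card_ones_eq_sum_card_colSupport, sum_sub_distrib, sum_const, card_univ]
          push_cast
          simp only [sum_add_distrib, sum_const, card_univ, nsmul_eq_mul, mul_one]
          ring
      _ ≤ ∑ j, t j := sum_le_sum fun j _ => natCast_sub_le_natCast_tsub _ _
  have h_pow : (∑ j, t j) ^ a ≤ (b - 1) * m ^ a * n ^ (a - 1) := by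
    have h_cols : ∑ j, t j ^ a ≤ (b - 1) * m ^ a := by
      have := Nat.cast_le (α := ℝ) |>.mpr (sum_pow_card_colSupport_sub_le hM)
      push_cast [Nat.cast_sub hb] at this
      exact this
    calc (∑ j, t j) ^ a ≤ n ^ (a - 1) * ∑ j, t j ^ a := by
          have := pow_sum_le_card_mul_sum_pow ht (a - 1)
          rwa [Nat.sub_add_cancel ha, card_univ] at this
      _ ≤ n ^ (a - 1) * ((b - 1) * m ^ a) := by gcongr
      _ = (b - 1) * m ^ a * n ^ (a - 1) := by ring
  have h_sum : ∑ j, t j ≤ (b - 1) ^ ((1 : ℝ) / a) * m * n ^ (1 - (1 : ℝ) / a) := by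
    rw [← Real.rpow_one_div_mul_pow_mul_pow_pred hb' (by positivity) (by positivity) ha,
      one_div, Real.le_rpow_inv_iff_of_pos (sum_nonneg ht) (by positivity) (by positivity),
      Real.rpow_natCast]
    exact h_pow
  linarith

theorem Nat.cast_sSup_le {s : Set ℕ} {R : ℝ} (hR : 0 ≤ R) (h : ∀ k ∈ s, (k : ℝ) ≤ R) :
    ((sSup s : ℕ) : ℝ) ≤ R :=
  calc ((sSup s : ℕ) : ℝ) ≤ ⌊R⌋₊ := Nat.cast_le.mpr <| csSup_le' fun k hk => Nat.le_floor (h k hk)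
    _ ≤ R := Nat.floor_le hR

theorem kst_zarankiewicz_general (a b m n : ℕ) (ha : 1 ≤ a) (hb : 1 ≤ b) :
    (_root_.zarankiewicz m n a b : ℝ) ≤
      ((b : ℝ) - 1) ^ ((1 : ℝ) / a) * m * (n : ℝ) ^ (1 - (1 : ℝ) / a)
        + ((a : ℝ) - 1) * n := by
  have hb' : (0 : ℝ) ≤ b - 1 := by rw [sub_nonneg]; exact_mod_cast hb
  have ha' : (0 : ℝ) ≤ a - 1 := by rw [sub_nonneg]; exact_mod_cast ha
  refine Nat.cast_sSup_le (by positivity) ?_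
  rintro k ⟨M, hM, rfl⟩
  simpa using card_ones_le_of_not_hasAllOnesSubmatrix ha hb hM

/-- Kővári–T. Sós–Turán bound for the Zarankiewicz problem:
`Z(m,n,a,b) ≤ (b−1)^{1/a}·m·n^{1−1/a} + (a−1)·n`. -/
theorem kst_zarankiewicz (a b m n : ℕ) (ha : 1 ≤ a) (hb : 1 ≤ b)
    (hm : 1 ≤ m) (hn : 1 ≤ n) :
    (_root_.zarankiewicz m n a b : ℝ) ≤
      ((b : ℝ) - 1) ^ ((1 : ℝ) / a) * m * (n : ℝ) ^ (1 - (1 : ℝ) / a)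
        + ((a : ℝ) - 1) * n :=
  kst_zarankiewicz_general a b m n ha hb
end

section
/- For all integers m, n ≥ 1 the Zarankiewicz number satisfies Z(m, n, 2, 2) ≤ (1/2)·(m + √(m² + 4·m·n·(n−1))). -/
open Finset SimpleGraph

/-!
Let `A i` be the set of columns of the `1`s in row `i`. A `2 × 2` all-ones submatrix is exactly
an ordered pair of distinct columns lying in two different rows `A i`, so for a matrix without
one the sets `(A i).offDiag` are pairwise disjoint and `∑ |A i| (|A i| - 1) ≤ n (n - 1)`.
With `k = ∑ |A i|` the number of `1`s, Cauchy–Schwarz gives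
`k² ≤ m ∑ |A i|² ≤ m (k + n (n - 1))`, and solving this quadratic inequality for `k` gives the
bound.
-/

theorem le_half_add_sqrt_of_sq_le_mul_add {x a b : ℝ} (h : x ^ 2 ≤ a * x + b) :
    x ≤ 1 / 2 * (a + √(a ^ 2 + 4 * b)) := by
  have hsq : (2 * x - a) ^ 2 ≤ a ^ 2 + 4 * b := by nlinarith
  have := (le_abs_self _).trans (Real.abs_le_sqrt hsq)
  linarith

theorem natCast_sSup_le {s : Set ℕ} {B : ℝ} (hB : 0 ≤ B) (h : ∀ k ∈ s, (k : ℝ) ≤ B) :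
    ((sSup s : ℕ) : ℝ) ≤ B :=
  (Nat.cast_le.2 (csSup_le' fun k hk => Nat.le_floor (h k hk))).trans (Nat.floor_le hB)

theorem Finset.sum_card_offDiag_le_of_pairwiseDisjoint {ι α : Type*} [Fintype α] [DecidableEq α]
    (s : Finset ι) (A : ι → Finset α) (h : (s : Set ι).PairwiseDisjoint fun i => (A i).offDiag) :
    ∑ i ∈ s, #(A i).offDiag ≤ #(univ : Finset α).offDiag := by
  rw [← card_biUnion h]
  exact card_le_card <| biUnion_subset.2 fun i _ => offDiag_mono (subset_univ _)

theorem Finset.card_sq_eq_card_offDiag_add_card {α : Type*} (s : Finset α) :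
    #s ^ 2 = #s.offDiag + #s := by
  rw [offDiag_card, sq, Nat.sub_add_cancel (Nat.le_mul_self _)]

namespace BoolMatrix

variable {ι κ : Type*} [Fintype κ] (M : ι → κ → Bool)

def ContainsAllOnesBlock (a b : ℕ) : Prop :=
  ∃ (R : Finset ι) (C : Finset κ), #R = a ∧ #C = b ∧ ∀ i ∈ R, ∀ j ∈ C, M i j = true

def row (i : ι) : Finset κ := {j | M i j = true}

theorem card_ones_eq_sum_card_row [Fintype ι] :
    #{p : ι × κ | M p.1 p.2 = true} = ∑ i, #(row M i) := by
  simp only [row, card_filter, Fintype.sum_prod_type]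

variable {M}

theorem pairwiseDisjoint_offDiag_row (hM : ¬ ContainsAllOnesBlock M 2 2) :
    (Set.univ : Set ι).PairwiseDisjoint fun i => (row M i).offDiag := by
  classical
  intro i₁ _ i₂ _ hi
  refine disjoint_left.2 fun ⟨j₁, j₂⟩ h₁ h₂ => hM ?_
  simp only [mem_offDiag, row, mem_filter, mem_univ, true_and] at h₁ h₂
  refine ⟨{i₁, i₂}, {j₁, j₂}, card_pair hi, card_pair h₁.2.2, ?_⟩
  simp only [mem_insert, mem_singleton]
  rintro i (rfl | rfl) j (rfl | rfl) <;> simp only [h₁, h₂]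

theorem sq_card_ones_le [Fintype ι] (hM : ¬ ContainsAllOnesBlock M 2 2) :
    #{p : ι × κ | M p.1 p.2 = true} ^ 2 ≤
      Fintype.card ι * (#{p : ι × κ | M p.1 p.2 = true} + #(univ : Finset κ).offDiag) := by
  classical
  rw [card_ones_eq_sum_card_row]
  calc (∑ i, #(row M i)) ^ 2
      ≤ Fintype.card ι * ∑ i, #(row M i) ^ 2 := sq_sum_le_card_mul_sum_sq
    _ = Fintype.card ι * (∑ i, #(row M i) + ∑ i, #(row M i).offDiag) := by
      simp only [card_sq_eq_card_offDiag_add_card, sum_add_distrib, add_comm]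
    _ ≤ Fintype.card ι * (∑ i, #(row M i) + #(univ : Finset κ).offDiag) := by
      gcongr
      refine sum_card_offDiag_le_of_pairwiseDisjoint _ _ ?_
      simpa only [coe_univ] using pairwiseDisjoint_offDiag_row hM

end BoolMatrix

theorem reiman_zarankiewicz_general (m n : ℕ) :
    (_root_.zarankiewicz m n 2 2 : ℝ) ≤
      1 / 2 * ((m : ℝ) + Real.sqrt ((m : ℝ) ^ 2 + 4 * m * n * ((n : ℝ) - 1))) := by
  refine natCast_sSup_le (by positivity) ?_
  rintro _ ⟨M, hM, rfl⟩
  have hk := BoolMatrix.sq_card_ones_le hM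
  simp only [offDiag_card, card_univ, Fintype.card_fin] at hk
  have hkR := (Nat.cast_le (α := ℝ)).2 hk
  push_cast [Nat.cast_sub (Nat.le_mul_self n)] at hkR
  convert le_half_add_sqrt_of_sq_le_mul_add (x := #{p : Fin m × Fin n | M p.1 p.2 = true}) (a := m)
    (b := m * n * (n - 1)) (by linarith) using 4
  ring

/-- Reiman: `Z(m,n,2,2) ≤ (1/2)·(m + √(m² + 4mn(n−1)))`. -/
theorem reiman_zarankiewicz (m n : ℕ) (hm : 1 ≤ m) (hn : 1 ≤ n) :
    (_root_.zarankiewicz m n 2 2 : ℝ) ≤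
      1 / 2 * ((m : ℝ) + Real.sqrt ((m : ℝ) ^ 2 + 4 * m * n * ((n : ℝ) - 1))) :=
  reiman_zarankiewicz_general m n
end

section
/- Let V be a finite set with n elements and let F be a finite family of 3-element subsets of V with the following property: there is no nonempty subfamily F' ⊆ F such that every 2-element subset of V is contained in an even number of members of F'. Then |F| ≤ C(n,2) = n(n−1)/2. -/
/-!
Over `ZMod 2`, record each member of the family by the indicator vector of the pairs it contains, a vector in
`ZMod 2` to the power `C(n,2)`. A linear dependency over `ZMod 2` is a nonempty subfamily whose
vectors sum to zero, i.e. an even cover of the pairs. So the hypothesis says that the vectors are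
linearly independent, and there are at most `C(n,2)` of them.
-/

open Finset

theorem linearIndependent_zmod_two_of_sum_ne_zero {ι M : Type*} [AddCommGroup M]
    [Module (ZMod 2) M] {v : ι → M} (hv : ∀ s : Finset ι, s.Nonempty → ∑ i ∈ s, v i ≠ 0) :
    LinearIndependent (ZMod 2) v := by
  rw [linearIndependent_iff']
  intro s g hg i hi
  by_contra hgi
  have hsupp : ∑ j ∈ s.filter (g · ≠ 0), v j = ∑ j ∈ s, g j • v j := by
    rw [sum_filter]
    refine sum_congr rfl fun j _ => ?_
    obtain h | h : g j = 0 ∨ g j = 1 := by generalize g j = z; revert z; decide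
    all_goals simp [h]
  exact hv _ ⟨i, mem_filter.2 ⟨hi, hgi⟩⟩ (hsupp.trans hg)

section EvenCover

variable {V : Type*} [DecidableEq V]

def pairIndicator (T : Finset V) : {s : Finset V // s.card = 2} → ZMod 2 :=
  fun s => if s.1 ⊆ T then 1 else 0

def IsEvenCover (F : Finset (Finset V)) : Prop :=
  ∀ x y : V, x ≠ y → Even ((F.filter fun T => x ∈ T ∧ y ∈ T).card)

theorem sum_pairIndicator_apply_pair (F : Finset (Finset V)) {x y : V} (hxy : x ≠ y) :
    (∑ T ∈ F, pairIndicator T) ⟨{x, y}, card_pair hxy⟩ =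
      ((F.filter fun T => x ∈ T ∧ y ∈ T).card : ZMod 2) := by
  simp [pairIndicator, Finset.sum_apply, insert_subset_iff]

theorem isEvenCover_of_sum_pairIndicator_eq_zero {F : Finset (Finset V)}
    (hF : ∑ T ∈ F, pairIndicator T = 0) : IsEvenCover F := fun x y hxy => by
  rw [← ZMod.natCast_eq_zero_iff_even, ← sum_pairIndicator_apply_pair F hxy, hF, Pi.zero_apply]

theorem linearIndependent_pairIndicator {F : Finset (Finset V)}
    (hF : ¬ ∃ F' ⊆ F, F'.Nonempty ∧ IsEvenCover F') :
    LinearIndependent (ZMod 2) fun T : F => pairIndicator T.1 := by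
  refine linearIndependent_zmod_two_of_sum_ne_zero fun s hs hsum => hF ?_
  refine ⟨s.map (.subtype _), fun T hT => ?_, hs.map, ?_⟩
  · obtain ⟨T', -, rfl⟩ := mem_map.1 hT
    exact T'.2
  · exact isEvenCover_of_sum_pairIndicator_eq_zero (by rwa [sum_map])

end EvenCover

theorem lovasz_even_cover_general {V : Type*} [Fintype V] [DecidableEq V] (n : ℕ)
    (hV : Fintype.card V = n) (F : Finset (Finset V))
    (hF : ¬ ∃ F' ⊆ F, F'.Nonempty ∧ ∀ x y : V, x ≠ y →
        Even ((F'.filter fun T => x ∈ T ∧ y ∈ T).card)) :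
    F.card ≤ n.choose 2 :=
  calc F.card = Fintype.card F := (Fintype.card_coe F).symm
    _ ≤ Module.finrank (ZMod 2) ({s : Finset V // s.card = 2} → ZMod 2) :=
      (linearIndependent_pairIndicator hF).fintype_card_le_finrank
    _ = n.choose 2 := by rw [Module.finrank_fintype_fun_eq_card, Fintype.card_finset_len, hV]

/-- Lovász: if `F` is a family of 3-element subsets of an `n`-element set such that
no nonempty subfamily `F' ⊆ F` covers every pair an even number of times, then
`|F| ≤ C(n,2)`. -/
theorem lovasz_even_cover {V : Type*} [Fintype V] [DecidableEq V] (n : ℕ)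
    (hV : Fintype.card V = n) (F : Finset (Finset V)) (h3 : ∀ T ∈ F, T.card = 3)
    (hF : ¬ ∃ F' ⊆ F, F'.Nonempty ∧ ∀ x y : V, x ≠ y →
        Even ((F'.filter fun T => x ∈ T ∧ y ∈ T).card)) :
    F.card ≤ n.choose 2 :=
  lovasz_even_cover_general n hV F hF
end

section
/- Let G be a bipartite simple graph on n vertices with at least 2 edges that contains no subgraph isomorphic to C₆. Then G contains a subgraph H with e(H) ≥ e(G)/2 + 1 edges such that H contains no subgraph isomorphic to C₄. -/
open Finset SimpleGraph

/-!
Induction on the number of edges, for triangle-free `C₆`-free graphs. If `G` contains a `C₄`,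
choose distinct `a, c` whose common neighbourhood `S` is as large as possible, so `|S| ≥ 2`.
Delete the `2|S|` edges between `{a, c}` and `S`, take a `C₄`-free subgraph `H'` of what is left
by induction, and add back the star from `a` to `S` together with one edge `c s₀`: this gains
`|S| + 1` edges, one more than half of those deleted.

The key fact is that a path `s x y a` with `s ∈ S`, `x ≠ a`, `y ≠ s` must have `x = c`.
Otherwise `a s x y c d` or `y a d c s x` is a `C₆` for a suitable `d ∈ S`; when `y ∈ S` a `d`
outside `{s, y}` exists because `s` and `y` have the three common neighbours `a, c, x`, and `|S|`
is maximal. Hence a `C₄` through an added edge would pass through `c` and give `c` two neighbours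
in `S`, while `c` has only `s₀` there.
-/

theorem Sym2.disjoint_image_mk_of_notMem {α : Type*} {a c : α} {S : Set α} (hac : a ≠ c)
    (ha : a ∉ S) : Disjoint ((s(a, ·)) '' S) ((s(c, ·)) '' S) := by
  refine Set.disjoint_left.mpr ?_
  rintro _ ⟨v, -, rfl⟩ ⟨w, hw, h⟩
  rcases Sym2.eq_iff.mp h with ⟨hca, -⟩ | ⟨-, rfl⟩
  exacts [hac hca.symm, ha hw]

namespace SimpleGraph

variable {V : Type*} {G H : SimpleGraph V}

theorem ContainsCopy.mono {β : Type*} {K : SimpleGraph β} (h : G.ContainsCopy K) (hle : G ≤ H) :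
    H.ContainsCopy K :=
  let ⟨f, hf⟩ := h; ⟨f, fun u v huv => hle (hf u v huv)⟩

theorem containsCopy_cycleGraph_of_adj {n : ℕ} {f : Fin (n + 2) → V} (hf : f.Injective)
    (hadj : ∀ i, G.Adj (f i) (f (i + 1))) : G.ContainsCopy (cycleGraph (n + 2)) := by
  refine ⟨⟨f, hf⟩, fun u v huv => ?_⟩
  rcases cycleGraph_adj.mp huv with h | h
  · rw [sub_eq_iff_eq_add'] at h
    simpa [h] using (hadj v).symm
  · rw [sub_eq_iff_eq_add'] at h
    simpa [h] using hadj u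

theorem containsCopy_cycleGraph_four_iff :
    G.ContainsCopy (cycleGraph 4) ↔
      ∃ p q r w, p ≠ r ∧ q ≠ w ∧ G.Adj p q ∧ G.Adj q r ∧ G.Adj r w ∧ G.Adj w p := by
  constructor
  · rintro ⟨f, hf⟩
    exact ⟨f 0, f 1, f 2, f 3, f.injective.ne (by decide), f.injective.ne (by decide),
      hf _ _ (by decide), hf _ _ (by decide), hf _ _ (by decide), hf _ _ (by decide)⟩
  · rintro ⟨p, q, r, w, hpr, hqw, hpq, hqr, hrw, hwp⟩
    refine containsCopy_cycleGraph_of_adj (f := ![p, q, r, w]) ?_ ?_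
    · intro i j hij
      fin_cases i <;> fin_cases j <;>
        simp_all [hpq.ne, hqr.ne, hrw.ne, hwp.ne, hpq.ne', hqr.ne', hrw.ne', hwp.ne', eq_comm]
    · intro i
      fin_cases i <;> assumption

theorem containsCopy_cycleGraph_six {v₀ v₁ v₂ v₃ v₄ v₅ : V}
    (h₀₂ : v₀ ≠ v₂) (h₀₃ : v₀ ≠ v₃) (h₀₄ : v₀ ≠ v₄) (h₁₃ : v₁ ≠ v₃) (h₁₄ : v₁ ≠ v₄)
    (h₁₅ : v₁ ≠ v₅) (h₂₄ : v₂ ≠ v₄) (h₂₅ : v₂ ≠ v₅) (h₃₅ : v₃ ≠ v₅)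
    (h₀₁ : G.Adj v₀ v₁) (h₁₂ : G.Adj v₁ v₂) (h₂₃ : G.Adj v₂ v₃) (h₃₄ : G.Adj v₃ v₄)
    (h₄₅ : G.Adj v₄ v₅) (h₅₀ : G.Adj v₅ v₀) : G.ContainsCopy (cycleGraph 6) := by
  refine containsCopy_cycleGraph_of_adj (f := ![v₀, v₁, v₂, v₃, v₄, v₅]) ?_ ?_
  · intro i j hij
    fin_cases i <;> fin_cases j <;>
      simp_all [h₀₁.ne, h₁₂.ne, h₂₃.ne, h₃₄.ne, h₄₅.ne, h₅₀.ne,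
        h₀₁.ne', h₁₂.ne', h₂₃.ne', h₃₄.ne', h₄₅.ne', h₅₀.ne', eq_comm]
  · intro i
    fin_cases i <;> assumption

theorem CliqueFree.not_adj_of_adj {a b c : V} (h : G.CliqueFree 3) (hab : G.Adj a b)
    (hbc : G.Adj b c) : ¬ G.Adj a c := by
  classical
  exact fun hac => h {a, b, c} (is3Clique_triple_iff.mpr ⟨hab, hac, hbc⟩)

def IsMaxCommonNeighborsPair (G : SimpleGraph V) (a c : V) : Prop :=
  a ≠ c ∧ ∀ u v, u ≠ v → (G.commonNeighbors u v).ncard ≤ (G.commonNeighbors a c).ncard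

variable {a c s x y : V}

theorem IsMaxCommonNeighborsPair.symm (h : G.IsMaxCommonNeighborsPair a c) :
    G.IsMaxCommonNeighborsPair c a :=
  ⟨h.1.symm, commonNeighbors_symm G a c ▸ h.2⟩

theorem exists_isMaxCommonNeighborsPair [Finite V] [Nontrivial V] (G : SimpleGraph V) :
    ∃ a c, G.IsMaxCommonNeighborsPair a c := by
  have : Nonempty {p : V × V // p.1 ≠ p.2} :=
    let ⟨u, v, huv⟩ := exists_pair_ne V; ⟨⟨(u, v), huv⟩⟩
  obtain ⟨⟨⟨a, c⟩, hac⟩, hmax⟩ :=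
    Finite.exists_max fun p : {p : V × V // p.1 ≠ p.2} => (G.commonNeighbors p.1.1 p.1.2).ncard
  exact ⟨a, c, hac, fun u v huv => hmax ⟨(u, v), huv⟩⟩

theorem IsMaxCommonNeighborsPair.eq_of_adj [Finite V] (h3 : G.CliqueFree 3)
    (h6 : ¬ G.ContainsCopy (cycleGraph 6)) (hac : G.IsMaxCommonNeighborsPair a c)
    (hS : 2 ≤ (G.commonNeighbors a c).ncard) (hs : s ∈ G.commonNeighbors a c)
    (hsx : G.Adj s x) (hxy : G.Adj x y) (hya : G.Adj y a) (hxa : x ≠ a) (hys : y ≠ s) :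
    x = c := by
  obtain ⟨hne, hmax⟩ := hac
  have ⟨has, hcs⟩ := hs
  by_contra hxc
  have hxd : ∀ d, G.Adj a d → x ≠ d := fun d had hxd =>
    h3.not_adj_of_adj has hsx (hxd ▸ had)
  by_cases hyS : y ∈ G.commonNeighbors a c
  · obtain ⟨hay, hcy⟩ := hyS
    have h3S : 2 < (G.commonNeighbors a c).ncard :=
      calc 2 < 3 := by norm_num
        _ = ({a, c, x} : Set V).ncard :=
            (Set.ncard_eq_three.mpr ⟨a, c, x, hne, Ne.symm hxa, Ne.symm hxc, rfl⟩).symm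
        _ ≤ (G.commonNeighbors s y).ncard := by
            refine Set.ncard_le_ncard ?_
            simp only [Set.insert_subset_iff, Set.singleton_subset_iff, mem_commonNeighbors]
            exact ⟨⟨has.symm, hay.symm⟩, ⟨hcs.symm, hcy.symm⟩, ⟨hsx, hxy.symm⟩⟩
        _ ≤ _ := hmax s y hys.symm
    obtain ⟨d, ⟨⟨had, hcd⟩, hds⟩, hdy⟩ := Set.exists_ne_of_one_lt_ncard
      (s := G.commonNeighbors a c \ {s}) (by rw [Set.ncard_sdiff_singleton_of_mem hs]; omega) y
    exact h6 (containsCopy_cycleGraph_six hxa.symm hya.ne' hne hys.symm hcs.ne' (Ne.symm hds) hxc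
      (hxd d had) hdy.symm has hsx hxy hcy.symm hcd had.symm)
  · obtain ⟨d, ⟨had, hcd⟩, hds⟩ := Set.exists_ne_of_one_lt_ncard hS s
    have hyd : y ≠ d := fun h => hyS (h ▸ ⟨had, hcd⟩)
    have hyc : y ≠ c := fun h => h3.not_adj_of_adj has hcs.symm (h ▸ hya.symm)
    exact h6 (containsCopy_cycleGraph_six hyd hyc hys hne has.ne hxa.symm hds (hxd d had).symm
      (Ne.symm hxc) hya had hcd.symm hcs hsx hxy)

theorem mem_or_eq_of_adj_fromEdgeSet_insert_image {S : Set V} {s₀ u v : V}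
    (h : (fromEdgeSet (insert s(c, s₀) ((s(a, ·)) '' S))).Adj u v) :
    (u = a ∧ v ∈ S ∨ u = c ∧ v = s₀) ∨ (v = a ∧ u ∈ S ∨ v = c ∧ u = s₀) := by
  simp only [fromEdgeSet_adj, Set.mem_insert_iff, Set.mem_image, Sym2.eq_iff] at h
  grind

theorem IsMaxCommonNeighborsPair.not_containsCopy_cycleGraph_four_sup [Finite V] {s₀ : V}
    (h3 : G.CliqueFree 3) (h6 : ¬ G.ContainsCopy (cycleGraph 6))
    (hac : G.IsMaxCommonNeighborsPair a c) (hS : 2 ≤ (G.commonNeighbors a c).ncard)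
    (hs₀ : s₀ ∈ G.commonNeighbors a c) (hHG : H ≤ G)
    (hHc : ∀ v ∈ G.commonNeighbors a c, ¬ H.Adj c v) (hH4 : ¬ H.ContainsCopy (cycleGraph 4)) :
    ¬ (H ⊔ fromEdgeSet (insert s(c, s₀) ((s(a, ·)) '' G.commonNeighbors a c))).ContainsCopy
      (cycleGraph 4) := by
  set S := G.commonNeighbors a c
  set K := fromEdgeSet (insert s(c, s₀) ((s(a, ·)) '' S))
  have hKG : K ≤ G := fun u v huv => by
    rcases mem_or_eq_of_adj_fromEdgeSet_insert_image huv with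
      (⟨rfl, hv⟩ | ⟨rfl, rfl⟩) | (⟨rfl, hu⟩ | ⟨rfl, rfl⟩)
    exacts [hv.1, hs₀.2, hu.1.symm, hs₀.2.symm]
  have hLG : H ⊔ K ≤ G := sup_le hHG hKG
  have hc_not_mem : c ∉ S := fun h => G.loopless.irrefl c h.2
  have hLc : ∀ v ∈ S, (H ⊔ K).Adj c v → v = s₀ := by
    rintro v hv (h | h)
    · exact absurd h (hHc v hv)
    · rcases mem_or_eq_of_adj_fromEdgeSet_insert_image h with
        (⟨h, -⟩ | ⟨-, rfl⟩) | (⟨-, h⟩ | ⟨h, -⟩)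
      exacts [absurd h hac.1.symm, rfl, absurd h hc_not_mem, absurd (h ▸ hv) hc_not_mem]
  have hfirst : ∀ p q r w, p ≠ r → q ≠ w → (H ⊔ K).Adj p q → (H ⊔ K).Adj q r →
      (H ⊔ K).Adj r w → (H ⊔ K).Adj w p → (p = a ∧ q ∈ S ∨ p = c ∧ q = s₀) → False := by
    rintro p q r w hpr hqw - hqr hrw hwp (⟨hp, hq⟩ | ⟨hp, hq⟩) <;> subst p
    · have hrc := hac.eq_of_adj h3 h6 hS hq (hLG hqr) (hLG hrw) (hLG hwp) hpr.symm hqw.symm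
      subst hrc
      have hw : w ∈ S := ⟨(hLG hwp).symm, hLG hrw⟩
      exact hqw ((hLc q hq hqr.symm).trans (hLc w hw hrw).symm)
    · subst q
      have hra := hac.symm.eq_of_adj h3 h6 (commonNeighbors_symm G a c ▸ hS)
        (commonNeighbors_symm G a c ▸ hs₀) (hLG hqr) (hLG hrw) (hLG hwp) hpr.symm hqw.symm
      subst hra
      exact hqw (hLc w ⟨hLG hrw, (hLG hwp).symm⟩ hwp.symm).symm
  have hnotK : ∀ p q r w, p ≠ r → q ≠ w → (H ⊔ K).Adj p q → (H ⊔ K).Adj q r →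
      (H ⊔ K).Adj r w → (H ⊔ K).Adj w p → ¬ K.Adj p q :=
    fun p q r w hpr hqw hpq hqr hrw hwp hK =>
    (mem_or_eq_of_adj_fromEdgeSet_insert_image hK).elim (hfirst p q r w hpr hqw hpq hqr hrw hwp)
      (hfirst q p w r hqw hpr hpq.symm hwp.symm hrw.symm hqr.symm)
  rw [containsCopy_cycleGraph_four_iff]
  rintro ⟨p, q, r, w, hpr, hqw, hpq, hqr, hrw, hwp⟩
  have hpq' := hnotK p q r w hpr hqw hpq hqr hrw hwp
  have hqr' := hnotK q r w p hqw hpr.symm hqr hrw hwp hpq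
  have hrw' := hnotK r w p q hpr.symm hqw.symm hrw hwp hpq hqr
  have hwp' := hnotK w p q r hqw.symm hpr hwp hpq hqr hrw
  exact hH4 (containsCopy_cycleGraph_four_iff.mpr ⟨p, q, r, w, hpr, hqw, hpq.resolve_right hpq',
    hqr.resolve_right hqr', hrw.resolve_right hrw', hwp.resolve_right hwp'⟩)

section edgeCount

variable [Fintype V]

theorem edgeCount_deleteEdges_add {s : Set (Sym2 V)} (hs : s ⊆ G.edgeSet) :
    edgeCount (G.deleteEdges s) + s.ncard = edgeCount G := by
  rw [edgeCount, edgeSet_deleteEdges, Set.ncard_sdiff_add_ncard_of_subset hs, edgeCount]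

theorem edgeCount_sup_fromEdgeSet {s : Set (Sym2 V)} (hs : Disjoint s Sym2.diagSet)
    (hHs : Disjoint H.edgeSet s) : edgeCount (H ⊔ fromEdgeSet s) = edgeCount H + s.ncard := by
  rw [edgeCount, edgeSet_sup, edgeSet_fromEdgeSet, hs.sdiff_eq_left, Set.ncard_union_eq hHs,
    edgeCount]

theorem exists_reduction_of_containsCopy_cycleGraph_four (h3 : G.CliqueFree 3)
    (h6 : ¬ G.ContainsCopy (cycleGraph 6)) (h4 : G.ContainsCopy (cycleGraph 4)) :
    ∃ G' ≤ G, edgeCount G' < edgeCount G ∧ ∀ H' ≤ G', ¬ H'.ContainsCopy (cycleGraph 4) →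
      ∃ H ≤ G, ¬ H.ContainsCopy (cycleGraph 4) ∧
        2 * edgeCount H' + edgeCount G + 2 = 2 * edgeCount H + edgeCount G' := by
  obtain ⟨p, q, r, w, hpr, hqw, hpq, hqr, hrw, hwp⟩ := containsCopy_cycleGraph_four_iff.mp h4
  have : Nontrivial V := ⟨⟨p, r, hpr⟩⟩
  obtain ⟨a, c, hac⟩ := G.exists_isMaxCommonNeighborsPair
  set S := G.commonNeighbors a c
  have hS : 2 ≤ S.ncard :=
    calc 2 = ({q, w} : Set V).ncard := (Set.ncard_pair hqw).symm
      _ ≤ (G.commonNeighbors p r).ncard := Set.ncard_le_ncard <|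
          Set.insert_subset ⟨hpq, hqr.symm⟩ (Set.singleton_subset_iff.mpr ⟨hwp.symm, hrw⟩)
      _ ≤ S.ncard := hac.2 p r hpr
  obtain ⟨s₀, hs₀⟩ := Set.nonempty_of_ncard_ne_zero (by omega : S.ncard ≠ 0)
  set Ea := (s(a, ·)) '' S
  set Ec := (s(c, ·)) '' S
  have hEa : Ea.ncard = S.ncard := Set.ncard_image_of_injective _ (Sym2.mkEmbedding a).injective
  have hEc : Ec.ncard = S.ncard := Set.ncard_image_of_injective _ (Sym2.mkEmbedding c).injective
  have hEaEc : Disjoint Ea Ec :=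
    Sym2.disjoint_image_mk_of_notMem hac.1 fun ha => G.loopless.irrefl a ha.1
  have hEG : Ea ∪ Ec ⊆ G.edgeSet := by
    rintro _ ((⟨v, hv, rfl⟩ | ⟨v, hv, rfl⟩))
    exacts [hv.1, hv.2]
  have hcount := edgeCount_deleteEdges_add hEG
  rw [Set.ncard_union_eq hEaEc, hEa, hEc] at hcount
  refine ⟨G.deleteEdges (Ea ∪ Ec), G.deleteEdges_le _, by omega, fun H' hH' hH'4 => ?_⟩
  have hK : insert s(c, s₀) Ea ⊆ Ea ∪ Ec :=
    Set.insert_subset (Or.inr ⟨s₀, hs₀, rfl⟩) Set.subset_union_left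
  have hKG : insert s(c, s₀) Ea ⊆ G.edgeSet := hK.trans hEG
  have hH'K : Disjoint H'.edgeSet (insert s(c, s₀) Ea) := by
    refine Set.disjoint_of_subset (edgeSet_mono hH') hK ?_
    rw [edgeSet_deleteEdges]
    exact Set.disjoint_sdiff_left
  have hH'G : H' ≤ G := hH'.trans (G.deleteEdges_le _)
  refine ⟨H' ⊔ fromEdgeSet (insert s(c, s₀) Ea), ?_, ?_, ?_⟩
  · exact sup_le hH'G (G.fromEdgeSet_le.mpr (Set.sdiff_subset.trans hKG))
  · refine hac.not_containsCopy_cycleGraph_four_sup h3 h6 hS hs₀ hH'G (fun v hv h => ?_) hH'4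
    exact (deleteEdges_adj.mp (hH' h)).2 (Or.inr ⟨v, hv, rfl⟩)
  · rw [edgeCount_sup_fromEdgeSet
      (Set.disjoint_left.mpr fun _ he => G.not_isDiag_of_mem_edgeSet (hKG he)) hH'K,
      Set.ncard_insert_of_notMem (Set.disjoint_right.mp hEaEc ⟨s₀, hs₀, rfl⟩), hEa]
    omega

theorem exists_le_not_containsCopy_cycleGraph_four (h3 : G.CliqueFree 3)
    (h6 : ¬ G.ContainsCopy (cycleGraph 6)) :
    ∃ H ≤ G, ¬ H.ContainsCopy (cycleGraph 4) ∧ edgeCount G ≤ 2 * edgeCount H ∧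
      (2 ≤ edgeCount G → edgeCount G + 2 ≤ 2 * edgeCount H) := by
  induction hn : edgeCount G using Nat.strong_induction_on generalizing G with
  | _ n ih =>
  by_cases h4 : G.ContainsCopy (cycleGraph 4)
  · obtain ⟨G', hG'G, hG'n, hstep⟩ := exists_reduction_of_containsCopy_cycleGraph_four h3 h6 h4
    obtain ⟨H', hH'G', hH'4, hH', -⟩ :=
      ih _ (hn ▸ hG'n) (h3.anti hG'G) (fun h => h6 (h.mono hG'G)) rfl
    obtain ⟨H, hHG, hH4, hcount⟩ := hstep H' hH'G' hH'4
    exact ⟨H, hHG, hH4, by omega, fun _ => by omega⟩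
  · exact ⟨G, le_rfl, h4, by omega, fun _ => by omega⟩

end edgeCount

end SimpleGraph

/-- Győri: a bipartite `C₆`-free graph `G` with at least 2 edges contains a
`C₄`-free subgraph `H` with `e(H) ≥ e(G)/2 + 1`. -/
theorem gyori_C6 {V : Type*} [Fintype V] (G : SimpleGraph V)
    (hbip : G.Colorable 2) (he : 2 ≤ edgeCount G)
    (hC6 : ¬ G.ContainsCopy (cycleGraph 6)) :
    ∃ H : SimpleGraph V, H ≤ G ∧ ¬ H.ContainsCopy (cycleGraph 4) ∧
      (edgeCount G : ℝ) / 2 + 1 ≤ (edgeCount H : ℝ) := by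
  obtain ⟨H, hHG, hH4, -, hH⟩ :=
    exists_le_not_containsCopy_cycleGraph_four (hbip.cliqueFree (by norm_num)) hC6
  have hcount : (edgeCount G : ℝ) + 2 ≤ 2 * edgeCount H := by exact_mod_cast hH he
  exact ⟨H, hHG, hH4, by linarith⟩
end

section
/- For every integer k ≥ 1 and every permutation σ of {1, …, k} there exists a constant c > 0 such that for every natural number n, every n × n 0-1 matrix M with more than c·n entries equal to 1 contains the permutation matrix of σ; that is, there exist row indices i₁ < i₂ < … < i_k and column indices j₁ < j₂ < … < j_k such that M[i_s, j_{σ(s)}] = 1 for every s ∈ {1, …, k}. -/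
/-!
Cut a matrix avoiding `σ` into `K × K` blocks, `K = k²`, and call a block wide (tall) when its
ones meet at least `k` columns (rows). Replacing every nonempty block by a single one gives a
matrix of size `m = n / K + 1` that still avoids `σ`. In one block column there are at most
`(k - 1) * C(K, k)` wide blocks: otherwise, by pigeonhole, `k` of them meet a common `k`-set of
columns, and choosing in the `s`-th of these blocks a one in the `σ s`-th of these columns gives a
copy of `σ`. Symmetrically for tall blocks. A wide or tall block has at most `K²` ones, any other
at most `(k - 1)²`, so the extremal function satisfies
`f n ≤ 2 K² (k - 1) C(K, k) m + (k - 1)² f m`, whence `f n ≤ k⁴ C(k², k) n` by induction.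
-/

open Finset

def ContainsPerm {α β : Type*} [Preorder α] [Preorder β] {k : ℕ} (σ : Equiv.Perm (Fin k))
    (S : Set (α × β)) : Prop :=
  ∃ i : Fin k → α, ∃ j : Fin k → β, StrictMono i ∧ StrictMono j ∧ ∀ s, (i s, j (σ s)) ∈ S

namespace ContainsPerm

variable {α β : Type*} {k : ℕ} {σ : Equiv.Perm (Fin k)}

theorem of_nonempty [Preorder α] [Preorder β] {S : Set (α × β)} (hk : k ≤ 1)
    (hS : S.Nonempty) : ContainsPerm σ S := by
  have : Subsingleton (Fin k) := Fin.subsingleton_iff_le_one.mpr hk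
  obtain ⟨p, hp⟩ := hS
  exact ⟨fun _ => p.1, fun _ => p.2, Subsingleton.strictMono _, Subsingleton.strictMono _,
    fun _ => hp⟩

theorem of_image_prodMap {α' β' : Type*} [LinearOrder α] [LinearOrder β] [Preorder α']
    [Preorder β'] {S : Set (α × β)} {f : α → α'} {g : β → β'} (hf : Monotone f)
    (hg : Monotone g) (h : ContainsPerm σ (Prod.map f g '' S)) : ContainsPerm σ S := by
  obtain ⟨i, j, hi, hj, hij⟩ := h
  choose p hpS hp using hij
  simp only [Prod.map, Prod.mk.injEq] at hp
  refine ⟨fun s => (p s).1, fun t => (p (σ.symm t)).2, fun s t hst => hf.reflect_lt ?_,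
    fun s t hst => hg.reflect_lt ?_, fun s => by simpa using hpS s⟩
  · simpa only [(hp _).1] using hi hst
  · simpa only [(hp _).2, Equiv.apply_symm_apply] using hj hst

theorem of_preimage_swap [Preorder α] [Preorder β] {S : Set (α × β)}
    (h : ContainsPerm σ⁻¹ (Prod.swap ⁻¹' S)) : ContainsPerm σ S := by
  obtain ⟨i, j, hi, hj, hij⟩ := h
  exact ⟨j, i, hj, hi, fun s => by simpa using hij (σ s)⟩

theorem of_forall_exists_mem {γ : Type*} [LinearOrder α] [LinearOrder β] [LinearOrder γ]
    {S : Set (α × β)} {f : α → γ} (hf : Monotone f) {F : Finset γ} {C : Finset β}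
    (hF : F.card = k) (hC : C.card = k) (h : ∀ I ∈ F, ∀ c ∈ C, ∃ r, f r = I ∧ (r, c) ∈ S) :
    ContainsPerm σ S := by
  set rowBlock := F.orderIsoOfFin hF
  set col := C.orderIsoOfFin hC
  choose r hr hrS using fun s => h _ (rowBlock s).2 _ (col (σ s)).2
  refine ⟨r, fun t => col t, fun s t hst => hf.reflect_lt ?_, fun s t hst => ?_, hrS⟩
  · simpa [hr] using rowBlock.strictMono hst
  · simpa using col.strictMono hst

end ContainsPerm

theorem Finset.exists_card_eq_forall_subset {ι α : Type*} [DecidableEq α] {k : ℕ}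
    {Q : Finset ι} {U : Finset α} {A : ι → Finset α} (hA : ∀ i ∈ Q, A i ⊆ U ∧ k ≤ (A i).card)
    (hQ : (k - 1) * U.card.choose k < Q.card) :
    ∃ F ⊆ Q, F.card = k ∧ ∃ C : Finset α, C.card = k ∧ ∀ i ∈ F, C ⊆ A i := by
  have hsub : ∀ i, ∃ C, i ∈ Q → C ⊆ A i ∧ C.card = k := fun i => by
    by_cases hi : i ∈ Q
    · obtain ⟨C, hC⟩ := exists_subset_card_eq (hA i hi).2
      exact ⟨C, fun _ => hC⟩
    · exact ⟨∅, fun h => absurd h hi⟩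
  choose C hC using hsub
  have hmaps : ∀ i ∈ Q, C i ∈ U.powersetCard k := fun i hi =>
    mem_powersetCard.mpr ⟨(hC i hi).1.trans (hA i hi).1, (hC i hi).2⟩
  obtain ⟨D, hD, hfiber⟩ := exists_lt_card_fiber_of_mul_lt_card_of_maps_to hmaps
    (by rwa [card_powersetCard, mul_comm])
  obtain ⟨F, hF, hFk⟩ := exists_subset_card_eq (show k ≤ (Q.filter (C · = D)).card by omega)
  refine ⟨F, hF.trans (filter_subset _ _), hFk, D, (mem_powersetCard.mp hD).2, fun i hi => ?_⟩
  obtain ⟨hiQ, rfl⟩ := mem_filter.mp (hF hi)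
  exact (hC i hiQ).1

namespace MarcusTardos

def contract (K : ℕ) : ℕ × ℕ → ℕ × ℕ := Prod.map (· / K) (· / K)

def block (S : Finset (ℕ × ℕ)) (K : ℕ) (q : ℕ × ℕ) : Finset (ℕ × ℕ) :=
  S.filter (contract K · = q)

variable {k K : ℕ} {σ : Equiv.Perm (Fin k)} {S : Finset (ℕ × ℕ)}

theorem mem_block {p q : ℕ × ℕ} : p ∈ block S K q ↔ p ∈ S ∧ p.1 / K = q.1 ∧ p.2 / K = q.2 := by
  simp [block, contract, Prod.ext_iff]

theorem mem_Ico_of_div_eq (hK : 0 < K) {x J : ℕ} (h : x / K = J) :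
    x ∈ Ico (J * K) (J * K + K) := by
  have := (Nat.div_eq_iff hK).mp h
  exact mem_Ico.mpr ⟨this.1, by omega⟩

theorem card_block_le (hK : 0 < K) (q : ℕ × ℕ) : (block S K q).card ≤ K ^ 2 := by
  calc (block S K q).card
      ≤ (Ico (q.1 * K) (q.1 * K + K) ×ˢ Ico (q.2 * K) (q.2 * K + K)).card := by
        refine card_le_card fun p hp => ?_
        obtain ⟨-, h1, h2⟩ := mem_block.mp hp
        exact mem_product.mpr ⟨mem_Ico_of_div_eq hK h1, mem_Ico_of_div_eq hK h2⟩
    _ = K ^ 2 := by simp [sq]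

theorem block_image_swap (q : ℕ × ℕ) :
    block (S.image Prod.swap) K q.swap = (block S K q).image Prod.swap := by
  ext p
  simp only [mem_image, mem_block]
  constructor
  · rintro ⟨⟨p', hp', rfl⟩, h1, h2⟩
    exact ⟨p', ⟨hp', h2, h1⟩, rfl⟩
  · rintro ⟨p', ⟨hp', h1, h2⟩, rfl⟩
    exact ⟨⟨p', hp', rfl⟩, h2, h1⟩

theorem not_containsPerm_image_swap (hS : ¬ContainsPerm σ (S : Set (ℕ × ℕ))) :
    ¬ContainsPerm σ⁻¹ (S.image Prod.swap : Set (ℕ × ℕ)) := fun h =>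
  hS (.of_preimage_swap (by rwa [coe_image, Set.image_swap_eq_preimage_swap] at h))

theorem card_le_of_forall_wide (hS : ¬ContainsPerm σ (S : Set (ℕ × ℕ))) (hK : 0 < K) (J : ℕ)
    {Q : Finset ℕ} (hQ : ∀ I ∈ Q, k ≤ ((block S K (I, J)).image Prod.snd).card) :
    Q.card ≤ (k - 1) * K.choose k := by
  by_contra! hlt
  have hA : ∀ I ∈ Q, (block S K (I, J)).image Prod.snd ⊆ Ico (J * K) (J * K + K) ∧
      k ≤ ((block S K (I, J)).image Prod.snd).card := fun I hI =>
    ⟨fun c hc => by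
      obtain ⟨p, hp, rfl⟩ := mem_image.mp hc
      exact mem_Ico_of_div_eq hK (mem_block.mp hp).2.2, hQ I hI⟩
  obtain ⟨F, -, hF, C, hC, hFC⟩ :=
    exists_card_eq_forall_subset hA (by simpa using hlt)
  refine hS (.of_forall_exists_mem (f := (· / K)) (fun _ _ h => Nat.div_le_div_right h) hF hC
    fun I hI c hc => ?_)
  obtain ⟨p, hp, rfl⟩ := mem_image.mp (hFC I hI hc)
  exact ⟨p.1, (mem_block.mp hp).2.1, (mem_block.mp hp).1⟩

theorem not_containsPerm_image_contract (hS : ¬ContainsPerm σ (S : Set (ℕ × ℕ))) :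
    ¬ContainsPerm σ (S.image (contract K) : Set (ℕ × ℕ)) := fun h =>
  hS (.of_image_prodMap (fun _ _ h => Nat.div_le_div_right h)
    (fun _ _ h => Nat.div_le_div_right h) (by rwa [coe_image] at h))

theorem forall_mem_image_contract_lt (hK : 0 < K) {m : ℕ}
    (hSm : ∀ p ∈ S, p.1 < m * K ∧ p.2 < m * K) :
    ∀ q ∈ S.image (contract K), q.1 < m ∧ q.2 < m := fun q hq => by
  obtain ⟨p, hp, rfl⟩ := mem_image.mp hq
  exact ⟨(Nat.div_lt_iff_lt_mul hK).mpr (hSm p hp).1,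
    (Nat.div_lt_iff_lt_mul hK).mpr (hSm p hp).2⟩

theorem card_filter_wide_le (hS : ¬ContainsPerm σ (S : Set (ℕ × ℕ))) (hK : 0 < K)
    {T : Finset (ℕ × ℕ)} {m : ℕ} (hT : ∀ q ∈ T, q.2 < m) :
    (T.filter fun q => k ≤ ((block S K q).image Prod.snd).card).card ≤
      (k - 1) * K.choose k * m := by
  set W := T.filter fun q => k ≤ ((block S K q).image Prod.snd).card
  refine (card_le_mul_card_image (f := Prod.snd) W _ fun J _ => ?_).trans
    (Nat.mul_le_mul_left _ ?_)
  · rw [← card_image_of_injOn (f := Prod.fst) fun q hq q' hq' h =>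
      Prod.ext h ((mem_filter.mp hq).2.trans (mem_filter.mp hq').2.symm)]
    refine card_le_of_forall_wide hS hK J fun I hI => ?_
    obtain ⟨q, hq, rfl⟩ := mem_image.mp hI
    obtain ⟨hqW, rfl⟩ := mem_filter.mp hq
    exact (mem_filter.mp hqW).2
  · calc (W.image Prod.snd).card ≤ (range m).card := card_le_card fun J hJ => by
          obtain ⟨q, hq, rfl⟩ := mem_image.mp hJ
          exact mem_range.mpr (hT q (mem_filter.mp hq).1)
      _ = m := card_range m

theorem card_filter_tall_le (hS : ¬ContainsPerm σ (S : Set (ℕ × ℕ))) (hK : 0 < K)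
    {T : Finset (ℕ × ℕ)} {m : ℕ} (hT : ∀ q ∈ T, q.1 < m) :
    (T.filter fun q => k ≤ ((block S K q).image Prod.fst).card).card ≤
      (k - 1) * K.choose k * m := by
  have h := card_filter_wide_le (not_containsPerm_image_swap hS) hK (T := T.image Prod.swap)
    fun q hq => by
      obtain ⟨p, hp, rfl⟩ := mem_image.mp hq
      exact hT p hp
  rw [filter_image, card_image_of_injective _ Prod.swap_injective] at h
  simpa only [Function.comp_def, block_image_swap, image_image, Prod.snd_swap] using h

theorem card_le_of_not_containsPerm_of_lt_mul (hS : ¬ContainsPerm σ (S : Set (ℕ × ℕ)))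
    (hK : 0 < K) {m : ℕ} (hSm : ∀ p ∈ S, p.1 < m * K ∧ p.2 < m * K) :
    S.card ≤ 2 * ((k - 1) * K.choose k * m) * K ^ 2 +
      (S.image (contract K)).card * (k - 1) ^ 2 := by
  set T := S.image (contract K)
  have hT := forall_mem_image_contract_lt hK hSm
  have hthin : ∀ q, ¬(k ≤ ((block S K q).image Prod.fst).card ∨
      k ≤ ((block S K q).image Prod.snd).card) → (block S K q).card ≤ (k - 1) ^ 2 := fun q hq =>
    calc (block S K q).card
        ≤ ((block S K q).image Prod.fst ×ˢ (block S K q).image Prod.snd).card :=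
          card_le_card subset_product
      _ ≤ (k - 1) ^ 2 := by rw [card_product, sq]; exact Nat.mul_le_mul (by omega) (by omega)
  calc S.card = ∑ q ∈ T, (block S K q).card := card_eq_sum_card_image _ _
    _ = ∑ q ∈ T with (k ≤ ((block S K q).image Prod.fst).card ∨
          k ≤ ((block S K q).image Prod.snd).card), (block S K q).card +
        ∑ q ∈ T with ¬(k ≤ ((block S K q).image Prod.fst).card ∨
          k ≤ ((block S K q).image Prod.snd).card), (block S K q).card :=
      (sum_filter_add_sum_filter_not _ _ _).symm
    _ ≤ (T.filter fun q => k ≤ ((block S K q).image Prod.fst).card ∨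
          k ≤ ((block S K q).image Prod.snd).card).card * K ^ 2 + T.card * (k - 1) ^ 2 := by
      gcongr
      · simpa using sum_le_card_nsmul _ _ _ fun q _ => card_block_le hK q
      · refine (sum_le_card_nsmul _ _ _ fun q hq => hthin q (mem_filter.mp hq).2).trans ?_
        simpa using Nat.mul_le_mul_right _ (card_filter_le _ _)
    _ ≤ 2 * ((k - 1) * K.choose k * m) * K ^ 2 + T.card * (k - 1) ^ 2 := by
      gcongr
      rw [filter_or, two_mul]
      exact (card_union_le _ _).trans (add_le_add
        (card_filter_tall_le hS hK fun q hq => (hT q hq).1)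
        (card_filter_wide_le hS hK fun q hq => (hT q hq).2))

theorem exists_lt_le_mul (hK : 2 ≤ K) {n : ℕ} (hn : K ^ 2 < n) :
    ∃ m < n, n ≤ m * K ∧ (K - 1) * m ≤ n := by
  have hq : K ≤ n / K := (Nat.le_div_iff_mul_le (by omega)).mpr (by nlinarith)
  have hn := Nat.div_add_mod n K
  have hr := Nat.mod_lt n (by omega : 0 < K)
  generalize n / K = q at *
  generalize n % K = r at *
  subst hn
  obtain ⟨L, rfl⟩ := Nat.exists_eq_add_of_le' hK
  refine ⟨q + 1, by nlinarith, by nlinarith, ?_⟩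
  rw [show L + 2 - 1 = L + 1 by omega]
  nlinarith

theorem card_le_of_not_containsPerm (σ : Equiv.Perm (Fin k)) (n : ℕ) (S : Finset (ℕ × ℕ))
    (hSn : ∀ p ∈ S, p.1 < n ∧ p.2 < n) (hS : ¬ContainsPerm σ (S : Set (ℕ × ℕ))) :
    S.card ≤ k ^ 4 * (k ^ 2).choose k * n := by
  rcases le_or_gt k 1 with hk | hk
  · have : S = ∅ := not_nonempty_iff_eq_empty.mp fun h =>
      hS (.of_nonempty hk (by exact_mod_cast h))
    simp [this]
  induction n using Nat.strong_induction_on generalizing S with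
  | _ n ih =>
  set K := k ^ 2
  have hC : 1 ≤ K.choose k := Nat.choose_pos (Nat.le_self_pow two_ne_zero k)
  rcases le_or_gt n (K ^ 2) with hn | hn
  · calc S.card ≤ (range n ×ˢ range n).card := card_le_card fun p hp =>
          mem_product.mpr ⟨mem_range.mpr (hSn p hp).1, mem_range.mpr (hSn p hp).2⟩
      _ = n * n := by simp
      _ ≤ k ^ 4 * K.choose k * n := Nat.mul_le_mul_right n
          (by rw [← pow_mul] at hn; exact hn.trans (Nat.le_mul_of_pos_right _ hC))
  have hK : 2 ≤ K := by simp only [K]; nlinarith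
  obtain ⟨m, hmn, hnm, hm⟩ := exists_lt_le_mul hK hn
  have hSm : ∀ p ∈ S, p.1 < m * K ∧ p.2 < m * K := fun p hp =>
    ⟨(hSn p hp).1.trans_le hnm, (hSn p hp).2.trans_le hnm⟩
  have hT := ih m hmn (S.image (contract K)) (forall_mem_image_contract_lt (by omega) hSm)
    (not_containsPerm_image_contract hS)
  calc S.card ≤ 2 * ((k - 1) * K.choose k * m) * K ^ 2 +
        (S.image (contract K)).card * (k - 1) ^ 2 :=
        card_le_of_not_containsPerm_of_lt_mul hS (by omega) hSm
    _ ≤ 2 * ((k - 1) * K.choose k * m) * K ^ 2 + k ^ 4 * K.choose k * m * (k - 1) ^ 2 := by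
        gcongr
    _ = k ^ 4 * K.choose k * ((K - 1) * m) := by
        simp only [K]
        zify [hk.le, show 1 ≤ k ^ 2 by nlinarith]
        ring
    _ ≤ k ^ 4 * K.choose k * n := Nat.mul_le_mul_left _ hm

end MarcusTardos

theorem marcus_tardos_general (k : ℕ) (σ : Equiv.Perm (Fin k)) :
    ∃ c : ℝ, 0 < c ∧ ∀ n : ℕ, ∀ M : Fin n → Fin n → Bool,
      c * (n : ℝ) < ((Finset.univ.filter fun p : Fin n × Fin n => M p.1 p.2 = true).card : ℝ) →
      ∃ (i : Fin k → Fin n) (j : Fin k → Fin n), StrictMono i ∧ StrictMono j ∧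
        ∀ s : Fin k, M (i s) (j (σ s)) = true := by
  refine ⟨k ^ 4 * (k ^ 2).choose k + 1, by positivity, fun n M hM => ?_⟩
  set ones := univ.filter fun p : Fin n × Fin n => M p.1 p.2 = true
  have hcard : (ones.image (Prod.map Fin.val Fin.val)).card = ones.card :=
    card_image_of_injective _ (Fin.val_injective.prodMap Fin.val_injective)
  suffices h : ContainsPerm σ (Prod.map Fin.val Fin.val '' (ones : Set (Fin n × Fin n))) by
    simpa [ContainsPerm, ones] using h.of_image_prodMap Fin.val_strictMono.monotone
      Fin.val_strictMono.monotone
  by_contra hS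
  have hle := MarcusTardos.card_le_of_not_containsPerm σ n (ones.image (Prod.map Fin.val Fin.val))
    (fun _ hp => by
      obtain ⟨q, -, rfl⟩ := mem_image.mp hp
      exact ⟨q.1.isLt, q.2.isLt⟩)
    (by rwa [coe_image])
  rw [hcard] at hle
  have hle' : (ones.card : ℝ) ≤ (k ^ 4 * (k ^ 2).choose k : ℕ) * n := by exact_mod_cast hle
  push_cast at hle'
  nlinarith [(n.cast_nonneg : (0 : ℝ) ≤ n)]

/-- Marcus–Tardos (Füredi–Hajnal conjecture): for every permutation `σ` of
`{1,…,k}` there is `c > 0` such that every `n × n` 0-1 matrix with more than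
`c·n` ones contains the permutation matrix of `σ`. -/
theorem marcus_tardos (k : ℕ) (hk : 1 ≤ k) (σ : Equiv.Perm (Fin k)) :
    ∃ c : ℝ, 0 < c ∧ ∀ n : ℕ, ∀ M : Fin n → Fin n → Bool,
      c * (n : ℝ) < ((Finset.univ.filter fun p : Fin n × Fin n => M p.1 p.2 = true).card : ℝ) →
      ∃ (i : Fin k → Fin n) (j : Fin k → Fin n), StrictMono i ∧ StrictMono j ∧
        ∀ s : Fin k, M (i s) (j (σ s)) = true :=
  marcus_tardos_general k σ
end
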